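/- Let S be a nonempty finite set, δ ∈ (0,1], and a : S × S → ℝ with δ ≤ a(i,j) ≤ 1 for all i,j ∈ S. Let f : S → ℝ be nonnegative with Σ_{j∈S} f(j) > 0, let k > l ≥ 0 be integers, and let p, q : S → ℝ be nonnegative with Σ_{i∈S} p(i) = Σ_{i∈S} q(i) = 1 satisfying the total-variation bound Σ_{i∈S} |p(i) − q(i)| ≤ 4(1−δ)^{k−1−l}. Then |log(Σ_{i,j∈S} f(j) a(i,j) p(i)) − log(Σ_{i,j∈S} f(j) a(i,j) q(i))| ≤ 4 δ^{-1} (1−δ)^{k−1−l}. -/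

import Mathlib

/-!
The double sum is `∑ i, g i * r i` with row weights `g i = ∑ j, f j * a i j`, which lie in
`[δ F, F]` for `F = ∑ j, f j`. Hence both sums are at least `δ F`, they differ by at most
`F ∑ i, |p i - q i|`, and `log` is `1 / (δ F)`-Lipschitz on `[δ F, ∞)`.
-/

open Finset

theorem Real.abs_log_sub_log_le_abs_sub_div {x y c : ℝ} (hc : 0 < c) (hx : c ≤ x) (hy : c ≤ y) :
    |Real.log x - Real.log y| ≤ |x - y| / c := by
  have log_sub_le {u v : ℝ} (hu : c ≤ u) (hv : c ≤ v) : Real.log u - Real.log v ≤ |u - v| / c := by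
    have hu0 := hc.trans_le hu
    have hv0 := hc.trans_le hv
    calc Real.log u - Real.log v = Real.log (u / v) := (Real.log_div hu0.ne' hv0.ne').symm
      _ ≤ u / v - 1 := Real.log_le_sub_one_of_pos (div_pos hu0 hv0)
      _ = (u - v) / v := by field_simp
      _ ≤ |u - v| / c := div_le_div₀ (abs_nonneg _) (le_abs_self _) hc hv
  rw [abs_sub_le_iff]
  exact ⟨log_sub_le hx hy, abs_sub_comm x y ▸ log_sub_le hy hx⟩

section WeightedSums

variable {ι : Type*} [Fintype ι]

theorem le_sum_mul_of_forall_le {g r : ι → ℝ} {c : ℝ} (hg : ∀ i, c ≤ g i) (hr : ∀ i, 0 ≤ r i)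
    (hr_sum : ∑ i, r i = 1) : c ≤ ∑ i, g i * r i :=
  calc c = ∑ i, c * r i := by rw [← mul_sum, hr_sum, mul_one]
    _ ≤ ∑ i, g i * r i := sum_le_sum fun i _ => mul_le_mul_of_nonneg_right (hg i) (hr i)

theorem abs_sum_mul_sub_sum_mul_le {g r s : ι → ℝ} {M : ℝ} (hg : ∀ i, |g i| ≤ M) :
    |∑ i, g i * r i - ∑ i, g i * s i| ≤ M * ∑ i, |r i - s i| := by
  rw [← sum_sub_distrib, mul_sum]
  refine (abs_sum_le_sum_abs _ _).trans (sum_le_sum fun i _ => ?_)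
  rw [← mul_sub, abs_mul]
  exact mul_le_mul_of_nonneg_right (hg i) (abs_nonneg _)

end WeightedSums

section RowWeights

variable {S : Type*} [Fintype S] {δ : ℝ} {a : S → S → ℝ} {f : S → ℝ}

theorem mul_sum_le_sum_mul_of_le (ha : ∀ i j, δ ≤ a i j) (hf : ∀ j, 0 ≤ f j) (i : S) :
    δ * ∑ j, f j ≤ ∑ j, f j * a i j := by
  rw [mul_sum]
  exact sum_le_sum fun j _ => by rw [mul_comm]; exact mul_le_mul_of_nonneg_left (ha i j) (hf j)

theorem sum_mul_le_sum_of_le_one (ha : ∀ i j, a i j ≤ 1) (hf : ∀ j, 0 ≤ f j) (i : S) :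
    ∑ j, f j * a i j ≤ ∑ j, f j :=
  sum_le_sum fun j _ => mul_le_of_le_one_right (hf j) (ha i j)

end RowWeights

theorem abs_log_sub_log_le_of_tv_bound_general
    {S : Type*} [Fintype S]
    (δ : ℝ) (hδ0 : 0 < δ)
    (a : S → S → ℝ) (ha : ∀ i j, δ ≤ a i j ∧ a i j ≤ 1)
    (f : S → ℝ) (hf : ∀ j, 0 ≤ f j) (hfpos : 0 < ∑ j, f j)
    (k l : ℕ)
    (p q : S → ℝ) (hp : ∀ i, 0 ≤ p i) (hq : ∀ i, 0 ≤ q i)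
    (hpsum : ∑ i, p i = 1) (hqsum : ∑ i, q i = 1)
    (htv : ∑ i, |p i - q i| ≤ 4 * (1 - δ) ^ (k - 1 - l)) :
    |Real.log (∑ i, ∑ j, f j * a i j * p i) - Real.log (∑ i, ∑ j, f j * a i j * q i)|
      ≤ 4 * δ⁻¹ * (1 - δ) ^ (k - 1 - l) := by
  set F := ∑ j, f j
  set g : S → ℝ := fun i => ∑ j, f j * a i j
  have hg_lower := mul_sum_le_sum_mul_of_le (fun i j => (ha i j).1) hf
  have hg_abs (i : S) : |g i| ≤ F := by
    rw [abs_of_nonneg ((mul_pos hδ0 hfpos).le.trans (hg_lower i))]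
    exact sum_mul_le_sum_of_le_one (fun i j => (ha i j).2) hf i
  simp only [← sum_mul]
  calc |Real.log (∑ i, g i * p i) - Real.log (∑ i, g i * q i)|
      ≤ |∑ i, g i * p i - ∑ i, g i * q i| / (δ * F) :=
        Real.abs_log_sub_log_le_abs_sub_div (mul_pos hδ0 hfpos)
          (le_sum_mul_of_forall_le hg_lower hp hpsum) (le_sum_mul_of_forall_le hg_lower hq hqsum)
    _ ≤ F * (4 * (1 - δ) ^ (k - 1 - l)) / (δ * F) := by
        gcongr
        exact (abs_sum_mul_sub_sum_mul_le hg_abs).trans (mul_le_mul_of_nonneg_left htv hfpos.le)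
    _ = 4 * δ⁻¹ * (1 - δ) ^ (k - 1 - l) := by field_simp

/-- **Lemma 2.1 of the paper (uniform forgetting bound for `D_{k,l}^ψ`), abstract form.**
For a finite hidden state space `S`, transition weights `a i j ∈ [δ, 1]` with `δ ∈ (0,1]`,
a nonnegative function `f` with positive total mass, integers `k > l ≥ 0`, and two
probability vectors `p, q` on `S` with `Σ_i |p i − q i| ≤ 4 (1−δ)^(k−1−l)`, one has
`|log Σ_{i,j} f j * a i j * p i − log Σ_{i,j} f j * a i j * q i| ≤ 4 δ⁻¹ (1−δ)^(k−1−l)`. -/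
theorem abs_log_sub_log_le_of_tv_bound
    {S : Type*} [Fintype S] [Nonempty S]
    (δ : ℝ) (hδ0 : 0 < δ) (hδ1 : δ ≤ 1)
    (a : S → S → ℝ) (ha : ∀ i j, δ ≤ a i j ∧ a i j ≤ 1)
    (f : S → ℝ) (hf : ∀ j, 0 ≤ f j) (hfpos : 0 < ∑ j, f j)
    (k l : ℕ) (hlk : l < k)
    (p q : S → ℝ) (hp : ∀ i, 0 ≤ p i) (hq : ∀ i, 0 ≤ q i)
    (hpsum : ∑ i, p i = 1) (hqsum : ∑ i, q i = 1)
    (htv : ∑ i, |p i - q i| ≤ 4 * (1 - δ) ^ (k - 1 - l)) :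
    |Real.log (∑ i, ∑ j, f j * a i j * p i) - Real.log (∑ i, ∑ j, f j * a i j * q i)|
      ≤ 4 * δ⁻¹ * (1 - δ) ^ (k - 1 - l) :=
  abs_log_sub_log_le_of_tv_bound_general δ hδ0 a ha f hf hfpos k l p q hp hq hpsum hqsum htv
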